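/- Non-existence for a strengthened coupling constant (Section 3.4, second Proposition): Fix ε > 0 and suppose μ = 0. Then there exists δ > 0 such that whenever |t − γ| < δ, for every d > 0 every solution ψ of the perturbed model Lichnerowicz equation L_d^ε satisfies ψ(0) > 1; in particular there is no d > 0 admitting a solution with ψ(0) = 1. -/

import Mathlib

open Real Filter

/-- The 2π-periodic function equal to −1 on (−π,0) and 1 on (0,π). -/
noncomputable def lam (x : ℝ) : ℝ := if 0 < Real.sin x then 1 else -1

/-- The critical exponent q = 2n/(n−2). -/
noncomputable def qex (n : ℕ) : ℝ := 2 * n / ((n : ℝ) - 2)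

/-- The coupling constant κ = (n−1)/n. -/
noncomputable def kap (n : ℕ) : ℝ := ((n : ℝ) - 1) / n

/-- A solution of the perturbed model Lichnerowicz equation `L_d^ε`, arising from the
constraint equations with momentum constraint div K − (1+ε) d(tr K) = 0. -/
def IsPertModelSolution (n : ℕ) (t γ η μ ε d : ℝ) (ψ : ℝ → ℝ) : Prop :=
  (∀ x, ψ (x + 2 * Real.pi) = ψ x) ∧
  (∀ x, 0 < ψ x) ∧
  ContDiff ℝ 1 ψ ∧
  ∀ x : ℝ, (∀ k : ℤ, x ≠ (k : ℝ) * Real.pi) →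
    DifferentiableAt ℝ (deriv ψ) x ∧
    -2 * kap n * qex n * d ^ (-(qex n - 2)) * deriv (deriv ψ) x
      - 2 * η ^ 2 * d ^ (-(2 * qex n)) * ψ x ^ (-qex n - 1)
      - kap n * ((1 + ε) * (γ + lam x) + μ * d ^ (-qex n)) ^ 2 * ψ x ^ (-qex n - 1)
      + kap n * (t + lam x) ^ 2 * ψ x ^ (qex n - 1) = 0

/-!
If `ψ 0 ≤ 1`, a global minimum `x₀` of the periodic solution has `ψ x₀ ≤ 1`. For `|t - γ|` small
compared with `ε · min (γ + 1) (1 - γ)`, the strengthened coupling `(1 + ε)` makes the term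
`((1 + ε)(γ + λ))² ψ^(-q-1)` dominate `(t + λ)² ψ^(q-1)` wherever `ψ^q < (1 + ε)/(1 + ε/2)`, so the
equation gives `ψ'' < 0` just to the right of `x₀` (away from the jumps of `λ`). Since `ψ' x₀ = 0`,
`ψ` strictly decreases there, contradicting minimality.
-/

open Topology

theorem Function.Periodic.exists_forall_le_of_continuous {f : ℝ → ℝ} {c : ℝ}
    (hp : Function.Periodic f c) (hc : c ≠ 0) (hf : Continuous f) : ∃ x₀, ∀ y, f x₀ ≤ f y := by
  obtain ⟨_, ⟨x₀, rfl⟩, hle⟩ :=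
    (hp.compact_of_continuous hc hf).exists_isLeast (Set.range_nonempty f)
  exact ⟨x₀, fun y => hle ⟨y, rfl⟩⟩

theorem eventually_nhdsGT_ne_int_mul {p : ℝ} (hp : 0 < p) (x : ℝ) :
    ∀ᶠ y in 𝓝[>] x, ∀ k : ℤ, y ≠ k * p := by
  have hx : x < (⌊x / p⌋ + 1 : ℤ) * p := by
    rw [← div_lt_iff₀ hp]
    push_cast
    exact Int.lt_floor_add_one _
  filter_upwards [Ioo_mem_nhdsGT hx] with y ⟨hxy, hyb⟩ k hk
  subst hk
  have hlo : ⌊x / p⌋ < k := Int.floor_lt.mpr ((div_lt_iff₀ hp).mpr hxy)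
  have hhi : k < ⌊x / p⌋ + 1 := by exact_mod_cast lt_of_mul_lt_mul_right hyb hp.le
  omega

theorem apply_lt_of_deriv_eq_zero_of_deriv_deriv_neg {f : ℝ → ℝ} {a b : ℝ} (hf : ContDiff ℝ 1 f)
    (ha : deriv f a = 0) (hab : a < b) (hneg : ∀ y ∈ Set.Ioo a b, deriv (deriv f) y < 0) :
    f b < f a := by
  have hf' : StrictAntiOn (deriv f) (Set.Icc a b) :=
    strictAntiOn_of_deriv_neg (convex_Icc a b) (hf.continuous_deriv le_rfl).continuousOn
      (by rwa [interior_Icc])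
  have hf'neg : ∀ y ∈ Set.Ioo a b, deriv f y < 0 := fun y hy =>
    ha ▸ hf' (Set.left_mem_Icc.mpr hab.le) (Set.Ioo_subset_Icc_self hy) hy.1
  exact strictAntiOn_of_deriv_neg (convex_Icc a b) hf.continuous.continuousOn
    (by rwa [interior_Icc]) (Set.left_mem_Icc.mpr hab.le) (Set.right_mem_Icc.mpr hab.le) hab

theorem neg_of_lichnerowicz_eq {κ q d η A B u D : ℝ} (hκ : 0 < κ) (hq : 0 < q) (hd : 0 < d)
    (hu : 0 < u) (hAB : |B| * u ^ q < |A|)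
    (h : -2 * κ * q * d ^ (-(q - 2)) * D - 2 * η ^ 2 * d ^ (-(2 * q)) * u ^ (-q - 1)
      - κ * A ^ 2 * u ^ (-q - 1) + κ * B ^ 2 * u ^ (q - 1) = 0) :
    D < 0 := by
  have hw : 0 < u ^ (-q - 1) := rpow_pos_of_pos hu _
  have hsplit : u ^ (q - 1) = u ^ q * u ^ q * u ^ (-q - 1) := by
    rw [← rpow_add hu, ← rpow_add hu]; ring_nf
  have hsq : (|B| * u ^ q) ^ 2 < |A| ^ 2 :=
    pow_lt_pow_left₀ hAB (mul_nonneg (abs_nonneg B) (rpow_nonneg hu.le q)) two_ne_zero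
  have hdefocus : κ * B ^ 2 * u ^ (q - 1) < κ * A ^ 2 * u ^ (-q - 1) := by
    rw [hsplit, ← sq_abs B, ← sq_abs A]
    nlinarith [mul_pos hκ hw]
  have hcoef : 0 < 2 * κ * q * d ^ (-(q - 2)) := by
    have := rpow_pos_of_pos hd (-(q - 2)); positivity
  have hη : 0 ≤ 2 * η ^ 2 * d ^ (-(2 * q)) * u ^ (-q - 1) := by
    have := rpow_pos_of_pos hd (-(2 * q)); positivity
  by_contra! hD
  nlinarith [mul_nonneg hcoef.le hD]

theorem abs_mul_lt_of_abs_sub_lt {s g v ε : ℝ} (hε : 0 < ε) (hv : 0 ≤ v)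
    (hvε : v * (1 + ε / 2) < 1 + ε) (hsg : |s - g| < ε * |g| / 2) :
    |s| * v < (1 + ε) * |g| := by
  have hg : 0 < |g| := by
    by_contra! hg; linarith [abs_nonneg (s - g), mul_nonpos_of_nonneg_of_nonpos hε.le hg]
  have hs : |s| < |g| * (1 + ε / 2) := by
    linarith [abs_sub_abs_le_abs_sub s g]
  nlinarith [mul_le_mul_of_nonneg_right hs.le hv]

theorem min_le_abs_add_lam (γ x : ℝ) : min (γ + 1) (1 - γ) ≤ |γ + lam x| := by
  unfold lam
  split_ifs
  · exact (min_le_left _ _).trans (le_abs_self _)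
  · exact (min_le_right _ _).trans (by rw [← sub_eq_add_neg, abs_sub_comm]; exact le_abs_self _)

theorem qex_pos {n : ℕ} (hn : 3 ≤ n) : 0 < qex n := by
  have : (3 : ℝ) ≤ n := by exact_mod_cast hn
  exact div_pos (by linarith) (by linarith)

theorem kap_pos {n : ℕ} (hn : 3 ≤ n) : 0 < kap n := by
  have : (3 : ℝ) ≤ n := by exact_mod_cast hn
  exact div_pos (by linarith) (by linarith)

theorem IsPertModelSolution.deriv_deriv_neg {n : ℕ} {t γ η ε d : ℝ} {ψ : ℝ → ℝ}
    (hψ : IsPertModelSolution n t γ η 0 ε d ψ) (hn : 3 ≤ n) (hε : 0 < ε) (hd : 0 < d)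
    (ht : |t - γ| < ε * min (γ + 1) (1 - γ) / 2) {x : ℝ} (hx : ∀ k : ℤ, x ≠ k * π)
    (hψx : ψ x ^ qex n * (1 + ε / 2) < 1 + ε) :
    deriv (deriv ψ) x < 0 := by
  have heq := (hψ.2.2.2 x hx).2
  simp only [zero_mul, add_zero] at heq
  have hψx0 := hψ.2.1 x
  refine neg_of_lichnerowicz_eq (kap_pos hn) (qex_pos hn) hd hψx0 ?_ heq
  rw [abs_mul, abs_of_pos (by linarith : (0 : ℝ) < 1 + ε)]
  refine abs_mul_lt_of_abs_sub_lt hε (rpow_nonneg hψx0.le _) hψx ?_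
  calc |t + lam x - (γ + lam x)| = |t - γ| := by ring_nf
    _ < ε * min (γ + 1) (1 - γ) / 2 := ht
    _ ≤ ε * |γ + lam x| / 2 := by gcongr; exact min_le_abs_add_lam γ x

/-- Non-existence for a strengthened coupling constant (Section 3.4, second Proposition). -/
theorem strengthened_coupling_nonexistence (n : ℕ) (hn : 3 ≤ n) (γ η ε : ℝ)
    (hγ : -1 < γ ∧ γ < 1) (hε : 0 < ε) :
    ∃ δ : ℝ, 0 < δ ∧
      ∀ t : ℝ, |t - γ| < δ →
        ∀ d : ℝ, 0 < d →
          ∀ ψ : ℝ → ℝ, IsPertModelSolution n t γ η 0 ε d ψ → 1 < ψ 0 := by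
  have hmargin : 0 < min (γ + 1) (1 - γ) := lt_min (by linarith [hγ.1]) (by linarith [hγ.2])
  refine ⟨ε * min (γ + 1) (1 - γ) / 2, by positivity, ?_⟩
  intro t ht d hd ψ hψ
  have ⟨hper, hpos, hC1, _⟩ := hψ
  obtain ⟨x₀, hmin⟩ :=
    Function.Periodic.exists_forall_le_of_continuous hper two_pi_pos.ne' hC1.continuous
  by_contra! h0
  have hψx₀ : ψ x₀ ^ qex n * (1 + ε / 2) < 1 + ε := by
    have : ψ x₀ ^ qex n ≤ 1 :=
      rpow_le_one (hpos x₀).le ((hmin 0).trans h0) (qex_pos hn).le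
    nlinarith
  have hcont : Continuous fun y => ψ y ^ qex n * (1 + ε / 2) :=
    (hC1.continuous.rpow_const fun y => Or.inl (hpos y).ne').mul continuous_const
  obtain ⟨b, hb, hsub⟩ := mem_nhdsGT_iff_exists_Ioo_subset.mp
    ((eventually_nhdsGT_ne_int_mul pi_pos x₀).and
      (nhdsWithin_le_nhds (hcont.continuousAt.eventually_lt continuousAt_const hψx₀)))
  have hdrop : ψ b < ψ x₀ :=
    apply_lt_of_deriv_eq_zero_of_deriv_deriv_neg hC1
      (IsLocalMin.deriv_eq_zero (Filter.Eventually.of_forall hmin)) hb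
      fun y hy => hψ.deriv_deriv_neg hn hε hd ht (hsub hy).1 (hsub hy).2
  linarith [hmin b]
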